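/- arXiv:2603.23716 — 6 statements merged into one kernel-verified Lean document; each statement's English description precedes it below -/
import Mathlib

section
/- Let A, B, C be real numbers with 0 < A < B < C and let x ≥ 0. With Tr_x = A + C + x, Δ_x = Tr_x² − 4·A·C·(1 + x/B), and A_x = (Tr_x − √Δ_x)/2, B_x = B + x (√ the real square root), one has A_x < B_x. -/
/-!
`A_x` and `C_x` are the roots of `t² - Tr_x t + Det_x`, and this quadratic takes the value
`-(B - A)(C - B)(B + x)/B < 0` at `t = B + x`; hence `B_x` lies strictly between the roots.
-/

theorem sub_sqrt_discrim_div_two_lt {s p t : ℝ} (h : t ^ 2 - s * t + p < 0) :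
    (s - √(s ^ 2 - 4 * p)) / 2 < t := by
  have hsq : (s - 2 * t) ^ 2 < s ^ 2 - 4 * p := by nlinarith
  have habs : |s - 2 * t| < √(s ^ 2 - 4 * p) := by
    rw [← Real.sqrt_sq_eq_abs]
    exact Real.sqrt_lt_sqrt (sq_nonneg _) hsq
  linarith [le_abs_self (s - 2 * t)]

theorem galois_charpoly_eval_B_add {A B C x : ℝ} (hB : B ≠ 0) :
    (B + x) ^ 2 - (A + C + x) * (B + x) + A * C * (1 + x / B)
      = -((B - A) * (C - B) * (B + x)) / B := by
  field_simp
  ring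

/-- For 0 < A < B < C, x ≥ 0, Tr_x = A+C+x, Δ_x = Tr_x² − 4AC(1+x/B),
A_x = (Tr_x − √Δ_x)/2 and B_x = B + x, one has A_x < B_x. -/
theorem galois_top_Ax_lt_Bx (A B C x : ℝ)
    (hA : 0 < A) (hAB : A < B) (hBC : B < C) (hx : 0 ≤ x) :
    ((A + C + x) - Real.sqrt ((A + C + x) ^ 2 - 4 * A * C * (1 + x / B))) / 2
      < B + x := by
  have hB : 0 < B := hA.trans hAB
  have hneg : (B + x) ^ 2 - (A + C + x) * (B + x) + A * C * (1 + x / B) < 0 := by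
    rw [galois_charpoly_eval_B_add hB.ne', neg_div]
    have hpos : 0 < (B - A) * (C - B) * (B + x) :=
      mul_pos (mul_pos (by linarith) (by linarith)) (by linarith)
    exact neg_neg_of_pos (div_pos hpos hB)
  have := sub_sqrt_discrim_div_two_lt hneg
  rwa [← mul_assoc, ← mul_assoc] at this
end

section
/- Let 𝕄 = {(A, B, C) ∈ ℝ³ : 0 < A < B < C}. For every (A, B, C) ∈ 𝕄 and every x ≥ 0, the image j(x)(A, B, C) = (A_x, B_x, C_x), where A_x = (Tr_x − √Δ_x)/2, B_x = B + x, C_x = (Tr_x + √Δ_x)/2 with Tr_x = A + C + x and Δ_x = Tr_x² − 4·A·C·(1 + x/B), again lies in 𝕄; that is, 0 < A_x < B_x < C_x. Moreover, this fails for x < 0 in general, i.e., x ≥ 0 is exactly the condition under which j(x) maps 𝕄 into 𝕄 with real eigenvalues given by the real square root. -/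
/-!
The components `A_x` and `C_x` of `j(x)(A, B, C)` are the two roots of
`p(λ) = λ² - Tr_x λ + Det_x`, and `p(B + x) = (B + x)(B - A)(B - C)/B`. For `x ≥ 0` this is
negative, so `B_x = B + x` lies strictly between the roots (in particular `Δ_x > 0`), and
`Tr_x, Det_x > 0` make the smaller root positive. For `x < 0` the triple `(-x/2, -x, -2x) ∈ 𝕄`
is sent to a triple with `B_x = 0`.
-/

/-- The set 𝕄 of ordered triples of principal moments of inertia. -/
def Mset : Set (ℝ × ℝ × ℝ) := {m | 0 < m.1 ∧ m.1 < m.2.1 ∧ m.2.1 < m.2.2}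

/-- The Galois-axis inertia map j(x), using the real square root. -/
noncomputable def jmap (x : ℝ) (m : ℝ × ℝ × ℝ) : ℝ × ℝ × ℝ :=
  (((m.1 + m.2.2 + x)
      - Real.sqrt ((m.1 + m.2.2 + x) ^ 2 - 4 * m.1 * m.2.2 * (1 + x / m.2.1))) / 2,
   m.2.1 + x,
   ((m.1 + m.2.2 + x)
      + Real.sqrt ((m.1 + m.2.2 + x) ^ 2 - 4 * m.1 * m.2.2 * (1 + x / m.2.1))) / 2)

theorem roots_lt_and_lt_of_quadratic_neg {t d b : ℝ} (h : b ^ 2 - t * b + d < 0) :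
    (t - √(t ^ 2 - 4 * d)) / 2 < b ∧ b < (t + √(t ^ 2 - 4 * d)) / 2 := by
  have hsq : (2 * b - t) ^ 2 < t ^ 2 - 4 * d := by linear_combination 4 * h
  have hupper := Real.lt_sqrt_of_sq_lt hsq
  have hlower := Real.lt_sqrt_of_sq_lt (neg_sq (2 * b - t) ▸ hsq)
  constructor <;> linarith

theorem sub_sqrt_discrim_pos {t d : ℝ} (ht : 0 < t) (hd : 0 < d) :
    0 < (t - √(t ^ 2 - 4 * d)) / 2 := by
  have : √(t ^ 2 - 4 * d) < t := (Real.sqrt_lt' ht).2 (by linarith)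
  linarith

theorem galois_charpoly_eval {A B C : ℝ} (x : ℝ) (hB : B ≠ 0) :
    (B + x) ^ 2 - (A + C + x) * (B + x) + A * C * (1 + x / B)
      = (B + x) * (B - A) * (B - C) / B := by
  field_simp
  ring

theorem Mset.snd_fst_pos {m : ℝ × ℝ × ℝ} (hm : m ∈ Mset) : 0 < m.2.1 :=
  hm.1.trans hm.2.1

theorem jmap_mem_Mset {x : ℝ} (hx : 0 ≤ x) {m : ℝ × ℝ × ℝ} (hm : m ∈ Mset) :
    jmap x m ∈ Mset := by
  obtain ⟨A, B, C⟩ := m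
  obtain ⟨hA, hAB, hBC⟩ := hm
  have hB : 0 < B := hA.trans hAB
  have hC : 0 < C := hB.trans hBC
  have hcharpoly_neg :
      (B + x) ^ 2 - (A + C + x) * (B + x) + A * C * (1 + x / B) < 0 := by
    rw [galois_charpoly_eval x hB.ne']
    exact div_neg_of_neg_of_pos
      (mul_neg_of_pos_of_neg (mul_pos (by linarith) (by linarith)) (by linarith)) hB
  obtain ⟨hlow, hhigh⟩ := roots_lt_and_lt_of_quadratic_neg hcharpoly_neg
  have hpos := sub_sqrt_discrim_pos (by positivity : 0 < A + C + x)
    (by positivity : 0 < A * C * (1 + x / B))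
  have hdiscrim : (A + C + x) ^ 2 - 4 * A * C * (1 + x / B)
      = (A + C + x) ^ 2 - 4 * (A * C * (1 + x / B)) := by ring
  simp only [jmap, hdiscrim]
  exact ⟨hpos, hlow, hhigh⟩

theorem nonneg_of_forall_jmap_mem_Mset {x : ℝ} (h : ∀ m ∈ Mset, jmap x m ∈ Mset) : 0 ≤ x := by
  by_contra! hx
  have hm : ((-x / 2, -x, -2 * x) : ℝ × ℝ × ℝ) ∈ Mset :=
    ⟨by linarith, by linarith, by linarith⟩
  have hBx := Mset.snd_fst_pos (h _ hm)
  simp only [jmap] at hBx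
  linarith

/-- For each real x, j(x) maps 𝕄 into 𝕄 if and only if x ≥ 0;
in particular for x ≥ 0 and (A,B,C) ∈ 𝕄 one has 0 < A_x < B_x < C_x. -/
theorem galois_top_jmap_into_Mset_iff (x : ℝ) :
    (∀ m ∈ Mset, jmap x m ∈ Mset) ↔ 0 ≤ x :=
  ⟨nonneg_of_forall_jmap_mem_Mset, fun hx _ hm => jmap_mem_Mset hx hm⟩
end

section
/- Let A, B, C be real numbers with 0 < A < B < C and let x, y ≥ 0. Write (A_y, B_y, C_y) = j(y)(A, B, C). Then the discriminant Δ computed at parameter x from the triple (A_y, B_y, C_y) equals the discriminant at parameter x + y computed from (A, B, C); explicitly, (A_y + C_y + x)² − 4·A_y·C_y·(1 + x/B_y) = (A + C + x + y)² − 4·A·C·(1 + (x + y)/B). -/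
/-! The map `j(y)` keeps the trace of the `(A, C)` block at `A + C + y` and, by Vieta, its
determinant at `A C (1 + y / B)`; composing with the trace shift by `x` and the factor
`1 + x / (B + y)` gives exactly the trace and determinant at parameter `x + y`, because
`(1 + y / B) (1 + x / (B + y)) = 1 + (x + y) / B`. -/

/-- The discriminant `Δ_x` of the `(A, C)` block at parameter `x`. -/
noncomputable def galoisDisc (A B C x : ℝ) : ℝ :=
  (A + C + x) ^ 2 - 4 * A * C * (1 + x / B)

theorem galoisDisc_mul_sq {A B C : ℝ} (hB : B ≠ 0) (x : ℝ) :
    B ^ 2 * galoisDisc A B C x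
      = (B * x + B * (A + C) - 2 * A * C) ^ 2 + 4 * A * C * (C - B) * (B - A) := by
  unfold galoisDisc
  field_simp
  ring

theorem galoisDisc_nonneg {A B C : ℝ} (hA : 0 < A) (hAB : A ≤ B) (hBC : B ≤ C) (x : ℝ) :
    0 ≤ galoisDisc A B C x := by
  have hB : 0 < B := hA.trans_le hAB
  have hC : 0 < C := hB.trans_le hBC
  refine (mul_nonneg_iff_of_pos_left (pow_pos hB 2)).mp ?_
  rw [galoisDisc_mul_sq hB.ne']
  have : 0 ≤ 4 * A * C * (C - B) * (B - A) := by
    have := sub_nonneg.mpr hBC; have := sub_nonneg.mpr hAB; positivity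
  positivity

theorem one_add_div_mul_one_add_div {K : Type*} [Field K] {B x y : K} (hB : B ≠ 0)
    (hBy : B + y ≠ 0) : (1 + y / B) * (1 + x / (B + y)) = 1 + (x + y) / B := by
  field_simp
  ring

theorem galois_top_disc_additive_general (A B C x y : ℝ)
    (hA : 0 < A) (hAB : A < B) (hBC : B < C) (hy : 0 ≤ y)
    (Ay By Cy : ℝ)
    (hAy : Ay = ((A + C + y) - Real.sqrt ((A + C + y) ^ 2 - 4 * A * C * (1 + y / B))) / 2)
    (hBy : By = B + y)
    (hCy : Cy = ((A + C + y) + Real.sqrt ((A + C + y) ^ 2 - 4 * A * C * (1 + y / B))) / 2) :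
    (Ay + Cy + x) ^ 2 - 4 * Ay * Cy * (1 + x / By)
      = (A + C + (x + y)) ^ 2 - 4 * A * C * (1 + (x + y) / B) := by
  have hB : 0 < B := hA.trans hAB
  have hdisc : 0 ≤ (A + C + y) ^ 2 - 4 * A * C * (1 + y / B) :=
    galoisDisc_nonneg hA hAB.le hBC.le y
  have hsum : Ay + Cy = A + C + y := by rw [hAy, hCy]; ring
  have hprod : Ay * Cy = A * C * (1 + y / B) := by
    rw [hAy, hCy]; linear_combination (-1 / 4 : ℝ) * Real.sq_sqrt hdisc
  have hdet := one_add_div_mul_one_add_div (x := x) hB.ne' (by linarith : 0 < B + y).ne'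
  rw [hBy, mul_assoc 4, hsum, hprod]
  linear_combination (-4 * A * C) * hdet

/-- The discriminant at parameter x computed from (A_y, B_y, C_y) = j(y)(A,B,C)
equals the discriminant at parameter x + y computed from (A, B, C). -/
theorem galois_top_disc_additive (A B C x y : ℝ)
    (hA : 0 < A) (hAB : A < B) (hBC : B < C) (hx : 0 ≤ x) (hy : 0 ≤ y)
    (Ay By Cy : ℝ)
    (hAy : Ay = ((A + C + y) - Real.sqrt ((A + C + y) ^ 2 - 4 * A * C * (1 + y / B))) / 2)
    (hBy : By = B + y)
    (hCy : Cy = ((A + C + y) + Real.sqrt ((A + C + y) ^ 2 - 4 * A * C * (1 + y / B))) / 2) :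
    (Ay + Cy + x) ^ 2 - 4 * Ay * Cy * (1 + x / By)
      = (A + C + (x + y)) ^ 2 - 4 * A * C * (1 + (x + y) / B) :=
  galois_top_disc_additive_general A B C x y hA hAB hBC hy Ay By Cy hAy hBy hCy
end

section
/- (Semigroup law for the Galois-axis inertia maps.) Let 𝕄 = {(A, B, C) ∈ ℝ³ : 0 < A < B < C}. For all x, y ≥ 0 and all (A, B, C) ∈ 𝕄, j(x)(j(y)(A, B, C)) = j(x + y)(A, B, C). Consequently, the set G_s = {j(x) : x ≥ 0} of self-maps of 𝕄 is an abelian (commutative) semigroup under composition, with neutral element j(0). -/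
/-!
The outer moments `A_x ≤ C_x` of `j(x)(A, B, C)` are the two roots of `t² - Tr_x t + Det_x`, so
`j(x)` only sees the triple `(A + C, A C, B)` and acts on it by
`(s, p, b) ↦ (s + x, p (b + x) / b, b + x)`. Thus `s` and `b` are translated by `x` while `p / b`
is invariant, which is visibly a semigroup action of `(ℝ, +)`. The only analytic input is that the
discriminant stays nonnegative, so that the roots can be recovered from their sum and product.
-/

open Real

/-- The triple whose outer entries are the roots of `t² - s t + p`, smaller one first. -/
noncomputable def quadRoots (s p b : ℝ) : ℝ × ℝ × ℝ :=
  ((s - √(s ^ 2 - 4 * p)) / 2, b, (s + √(s ^ 2 - 4 * p)) / 2)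

theorem jmap_eq_quadRoots (x : ℝ) (m : ℝ × ℝ × ℝ) :
    jmap x m = quadRoots (m.1 + m.2.2 + x) (m.1 * m.2.2 * (1 + x / m.2.1)) (m.2.1 + x) := by
  simp only [jmap, quadRoots, mul_assoc]

theorem quadRoots_fst_add_snd_snd (s p b : ℝ) :
    (quadRoots s p b).1 + (quadRoots s p b).2.2 = s := by
  simp only [quadRoots]
  ring

theorem quadRoots_fst_mul_snd_snd {s p : ℝ} (b : ℝ) (h : 4 * p ≤ s ^ 2) :
    (quadRoots s p b).1 * (quadRoots s p b).2.2 = p := by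
  have hsq : √(s ^ 2 - 4 * p) ^ 2 = s ^ 2 - 4 * p := sq_sqrt (by linarith)
  simp only [quadRoots]
  linear_combination (-1 / 4 : ℝ) * hsq

theorem jmap_quadRoots (x : ℝ) {s p : ℝ} (b : ℝ) (h : 4 * p ≤ s ^ 2) :
    jmap x (quadRoots s p b) = quadRoots (s + x) (p * (1 + x / b)) (b + x) := by
  rw [jmap_eq_quadRoots, quadRoots_fst_add_snd_snd, quadRoots_fst_mul_snd_snd b h]
  rfl

theorem jmap_jmap {m : ℝ × ℝ × ℝ} (x : ℝ) {y : ℝ} (hB : m.2.1 ≠ 0) (hBy : m.2.1 + y ≠ 0)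
    (hΔ : 4 * (m.1 * m.2.2 * (1 + y / m.2.1)) ≤ (m.1 + m.2.2 + y) ^ 2) :
    jmap x (jmap y m) = jmap (x + y) m := by
  rw [jmap_eq_quadRoots y, jmap_quadRoots x _ hΔ, jmap_eq_quadRoots]
  congr 1 <;> [ring; (field_simp; ring); ring]

theorem jmap_zero {m : ℝ × ℝ × ℝ} (h : m.1 ≤ m.2.2) : jmap 0 m = m := by
  have hΔ : (m.1 + m.2.2 + 0) ^ 2 - 4 * (m.1 * m.2.2 * (1 + 0 / m.2.1)) = (m.2.2 - m.1) ^ 2 := by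
    ring
  rw [jmap_eq_quadRoots, quadRoots, hΔ, sqrt_sq (sub_nonneg.2 h)]
  ext <;> simp only <;> ring

theorem four_mul_le_sq_of_mem_Mset {m : ℝ × ℝ × ℝ} (hm : m ∈ Mset) (y : ℝ) :
    4 * (m.1 * m.2.2 * (1 + y / m.2.1)) ≤ (m.1 + m.2.2 + y) ^ 2 := by
  obtain ⟨A, B, C⟩ := m
  obtain ⟨hA, hAB, hBC⟩ : 0 < A ∧ A < B ∧ B < C := hm
  have hB : 0 < B := hA.trans hAB
  have hC : 0 < C := hB.trans hBC
  have hΔ : (A + C + y) ^ 2 - 4 * (A * C * (1 + y / B))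
      = ((B * (A + C + y) - 2 * A * C) ^ 2 + 4 * A * C * (C - B) * (B - A)) / B ^ 2 := by
    field_simp
    ring
  have hpos : 0 ≤ 4 * A * C * (C - B) * (B - A) :=
    mul_nonneg (mul_nonneg (by positivity) (sub_nonneg.2 hBC.le)) (sub_nonneg.2 hAB.le)
  have : 0 ≤ (A + C + y) ^ 2 - 4 * (A * C * (1 + y / B)) := by
    rw [hΔ]
    positivity
  linarith

/-- Semigroup law j(x) ∘ j(y) = j(x+y) on 𝕄 for x, y ≥ 0; consequently the
maps j(x), x ≥ 0, form an abelian semigroup under composition with neutral element j(0). -/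
theorem galois_top_semigroup_law :
    (∀ x y : ℝ, 0 ≤ x → 0 ≤ y → ∀ m ∈ Mset, jmap x (jmap y m) = jmap (x + y) m) ∧
    (∀ x y : ℝ, 0 ≤ x → 0 ≤ y → ∀ m ∈ Mset, jmap x (jmap y m) = jmap y (jmap x m)) ∧
    (∀ m ∈ Mset, jmap 0 m = m) := by
  have law : ∀ x y : ℝ, 0 ≤ x → 0 ≤ y → ∀ m ∈ Mset, jmap x (jmap y m) = jmap (x + y) m := by
    intro x y _ hy m hm
    have hB : 0 < m.2.1 := hm.1.trans hm.2.1
    exact jmap_jmap x hB.ne' (add_pos_of_pos_of_nonneg hB hy).ne' (four_mul_le_sq_of_mem_Mset hm y)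
  refine ⟨law, fun x y hx hy m hm => ?_, fun m hm => jmap_zero (hm.2.1.trans hm.2.2).le⟩
  rw [law x y hx hy m hm, law y x hy hx m hm, add_comm]
end

section
/- Let 𝕄 = {(A, B, C) ∈ ℝ³ : 0 < A < B < C}. For all x, y ≥ 0 and all (A, B, C) ∈ 𝕄, the Galois-axis inertia maps commute: j(x)(j(y)(A, B, C)) = j(y)(j(x)(A, B, C)). -/
/-!
`j(x)` replaces `B` by `B + x` and `{A, C}` by the roots of `t² - (A + C + x) t + AC (1 + x/B)`.
By Vieta, the next map only sees `A + C`, `AC` and `B`, and since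
`AC (1 + y/B) (1 + x/(B + y)) = AC (1 + (x + y)/B)`, we get `j(x) ∘ j(y) = j(x + y)`,
which is symmetric in `x` and `y`.
-/

/-- The smaller root of `t² - s t + p`, then `b`, then the larger root. -/
noncomputable def rootTriple (s p b : ℝ) : ℝ × ℝ × ℝ :=
  ((s - √(s ^ 2 - 4 * p)) / 2, b, (s + √(s ^ 2 - 4 * p)) / 2)

lemma rootTriple_fst_add_snd_snd (s p b : ℝ) :
    (rootTriple s p b).1 + (rootTriple s p b).2.2 = s := by
  simp only [rootTriple]
  ring

lemma rootTriple_fst_mul_snd_snd {s p : ℝ} (h : 0 ≤ s ^ 2 - 4 * p) (b : ℝ) :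
    (rootTriple s p b).1 * (rootTriple s p b).2.2 = p := by
  simp only [rootTriple]
  linear_combination (-1 / 4 : ℝ) * Real.sq_sqrt h

lemma jmap_eq_rootTriple (x : ℝ) (m : ℝ × ℝ × ℝ) :
    jmap x m = rootTriple (m.1 + m.2.2 + x) (m.1 * m.2.2 * (1 + x / m.2.1)) (m.2.1 + x) := by
  simp only [jmap, rootTriple, mul_assoc]

lemma jmap_rootTriple (x : ℝ) {s p : ℝ} (h : 0 ≤ s ^ 2 - 4 * p) (b : ℝ) :
    jmap x (rootTriple s p b) = rootTriple (s + x) (p * (1 + x / b)) (b + x) := by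
  rw [jmap_eq_rootTriple, rootTriple_fst_add_snd_snd, rootTriple_fst_mul_snd_snd h]
  rfl

lemma jmap_discr_nonneg {A B C : ℝ} (hA : 0 ≤ A) (hB : 0 < B) (hAB : A ≤ B) (hBC : B ≤ C)
    (s : ℝ) : 0 ≤ (A + C + s) ^ 2 - 4 * (A * C * (1 + s / B)) := by
  have hC : 0 ≤ C := hB.le.trans hBC
  have key : (A + C + s) ^ 2 - 4 * (A * C * (1 + s / B))
      = ((s * B + (A + C) * B - 2 * A * C) ^ 2 + 4 * (A * C) * ((C - B) * (B - A))) / B ^ 2 := by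
    field_simp
    ring
  rw [key]
  have : 0 ≤ (C - B) * (B - A) := mul_nonneg (sub_nonneg.2 hBC) (sub_nonneg.2 hAB)
  positivity

lemma jmap_jmap_s11 {m : ℝ × ℝ × ℝ} (hm : m ∈ Mset) (x : ℝ) {y : ℝ} (hy : 0 ≤ y) :
    jmap x (jmap y m) = jmap (x + y) m := by
  obtain ⟨A, B, C⟩ := m
  obtain ⟨hA, hAB, hBC⟩ := hm
  have hB : 0 < B := hA.trans hAB
  have hBy : B + y ≠ 0 := by positivity
  rw [jmap_eq_rootTriple y,
    jmap_rootTriple x (jmap_discr_nonneg hA.le hB hAB.le hBC.le y), jmap_eq_rootTriple]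
  dsimp only
  congr 1
  · ring
  · field_simp
    ring
  · ring

/-- The Galois-axis inertia maps commute on 𝕄 for x, y ≥ 0. -/
theorem galois_top_jmaps_commute (x y : ℝ) (hx : 0 ≤ x) (hy : 0 ≤ y)
    (m : ℝ × ℝ × ℝ) (hm : m ∈ Mset) :
    jmap x (jmap y m) = jmap y (jmap x m) := by
  rw [jmap_jmap_s11 hm x hy, jmap_jmap_s11 hm y hx, add_comm]
end

section
/- (Group law of the complex inertia maps, stated via symmetric functions of the eigenvalue pair.) Let A, B, C, x, y ∈ ℂ with B ≠ 0 and B + y ≠ 0, and suppose A', C' ∈ ℂ satisfy A' + C' = A + C + y and A'·C' = A·C·(1 + y/B) (i.e., {A', C'} is the unordered eigenvalue pair produced by the complex inertia map with parameter y, and the middle eigenvalue is B' = B + y). Then A' + C' + x = A + C + (x + y) and A'·C'·(1 + x/B') = A·C·(1 + (x + y)/B); that is, applying the parameter x to (A', B', C') produces exactly the trace and determinant data of applying the parameter x + y to (A, B, C), so the 2-valued complex maps j̄(x) satisfy j̄(x) ∘ j̄(y) = j̄(x + y). -/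
/-- Since `1 + x / B = (B + x) / B`, the determinant factors telescope. -/
theorem one_add_div_mul_one_add_div_add {K : Type*} [Field K] {B y : K} (x : K)
    (hB : B ≠ 0) (hBy : B + y ≠ 0) :
    (1 + y / B) * (1 + x / (B + y)) = 1 + (x + y) / B := by
  field_simp
  ring

/-- Group law of the complex inertia maps, stated via the symmetric
functions (sum and product) of the unordered eigenvalue pair: applying parameter x to
(A', B + y, C') produces the trace/determinant data of applying x + y to (A, B, C),
so j̄(x) ∘ j̄(y) = j̄(x + y). -/
theorem galois_top_complex_group_law (A B C x y A' C' : ℂ)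
    (hB : B ≠ 0) (hBy : B + y ≠ 0)
    (hsum : A' + C' = A + C + y)
    (hprod : A' * C' = A * C * (1 + y / B)) :
    A' + C' + x = A + C + (x + y) ∧
    A' * C' * (1 + x / (B + y)) = A * C * (1 + (x + y) / B) := by
  refine ⟨by rw [hsum]; ring, ?_⟩
  rw [hprod, mul_assoc, one_add_div_mul_one_add_div_add x hB hBy]
end
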